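/- Let θ ∈ (0,1] and Ω_θ as above. Then the map Φ(σ₁,σ₂) := (2σ₁ − √(6σ₂ − 2σ₁²), 2σ₁ + √(6σ₂ − 2σ₁²)) is bilipschitz on Ω_θ with bilipschitz constant O(θ^{−1}). -/
import Mathlib


/-- The domain `Ω_θ`. -/
def stmt15Omega (θ : ℝ) : Set (ℝ × ℝ) :=
  {σ : ℝ × ℝ | Real.sqrt (σ.1 ^ 2 + σ.2 ^ 2) ≤ 10 ∧ θ ^ 2 ≤ 6 * σ.2 - 2 * σ.1 ^ 2}

/-- The map `Φ(σ₁,σ₂) = (2σ₁ − √(6σ₂ − 2σ₁²), 2σ₁ + √(6σ₂ − 2σ₁²))`. -/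
noncomputable def stmt15Phi (σ : ℝ × ℝ) : ℝ × ℝ :=
  (2 * σ.1 - Real.sqrt (6 * σ.2 - 2 * σ.1 ^ 2),
   2 * σ.1 + Real.sqrt (6 * σ.2 - 2 * σ.1 ^ 2))

set_option maxHeartbeats 1000000 in
theorem stmt_15 :
    ∃ c > 0, ∃ C > 0, ∀ θ : ℝ, 0 < θ → θ ≤ 1 →
      ∀ σ ∈ stmt15Omega θ, ∀ η ∈ stmt15Omega θ,
        c * θ * ‖σ - η‖ ≤ ‖stmt15Phi σ - stmt15Phi η‖ ∧
        ‖stmt15Phi σ - stmt15Phi η‖ ≤ C * θ⁻¹ * ‖σ - η‖ := by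
  refine ⟨1/7, by norm_num, 25, by norm_num, ?_⟩
  intro θ hθ hθ1 σ hσ η hη
  obtain ⟨hσ10, hσq⟩ := hσ
  obtain ⟨hη10, hηq⟩ := hη
  have hθ2 : (0:ℝ) < θ ^ 2 := by positivity
  set s := Real.sqrt (6 * σ.2 - 2 * σ.1 ^ 2) with hs
  set t := Real.sqrt (6 * η.2 - 2 * η.1 ^ 2) with ht
  have hs0 : 0 ≤ s := Real.sqrt_nonneg _
  have ht0 : 0 ≤ t := Real.sqrt_nonneg _
  have hsq : s ^ 2 = 6 * σ.2 - 2 * σ.1 ^ 2 := Real.sq_sqrt (by nlinarith)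
  have htq : t ^ 2 = 6 * η.2 - 2 * η.1 ^ 2 := Real.sq_sqrt (by nlinarith)
  have hsθ : θ ≤ s := by
    rw [hs]
    calc θ = Real.sqrt (θ ^ 2) := (Real.sqrt_sq hθ.le).symm
      _ ≤ _ := Real.sqrt_le_sqrt hσq
  have htθ : θ ≤ t := by
    rw [ht]
    calc θ = Real.sqrt (θ ^ 2) := (Real.sqrt_sq hθ.le).symm
      _ ≤ _ := Real.sqrt_le_sqrt hηq
  have hσ100 : σ.1 ^ 2 + σ.2 ^ 2 ≤ 100 := by
    have h := Real.sq_sqrt (by positivity : (0:ℝ) ≤ σ.1 ^ 2 + σ.2 ^ 2)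
    nlinarith [Real.sqrt_nonneg (σ.1 ^ 2 + σ.2 ^ 2)]
  have hη100 : η.1 ^ 2 + η.2 ^ 2 ≤ 100 := by
    have h := Real.sq_sqrt (by positivity : (0:ℝ) ≤ η.1 ^ 2 + η.2 ^ 2)
    nlinarith [Real.sqrt_nonneg (η.1 ^ 2 + η.2 ^ 2)]
  have hs8 : s ≤ 8 := by nlinarith [sq_nonneg (s - 8), sq_nonneg σ.1]
  have ht8 : t ≤ 8 := by nlinarith [sq_nonneg (t - 8), sq_nonneg η.1]
  have hσ1 : |σ.1| ≤ 10 := by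
    rw [abs_le]
    constructor
    · nlinarith [sq_nonneg (σ.1 + 10), sq_nonneg σ.2]
    · nlinarith [sq_nonneg (σ.1 - 10), sq_nonneg σ.2]
  have hη1 : |η.1| ≤ 10 := by
    rw [abs_le]
    constructor
    · nlinarith [sq_nonneg (η.1 + 10), sq_nonneg η.2]
    · nlinarith [sq_nonneg (η.1 - 10), sq_nonneg η.2]
  have hsum20 : |σ.1 + η.1| ≤ 20 := by
    calc |σ.1 + η.1| ≤ |σ.1| + |η.1| := abs_add_le _ _
      _ ≤ 20 := by linarith
  set A := σ.1 - η.1 with hA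
  set B := σ.2 - η.2 with hB
  set d := s - t with hd
  have hd_st : d * (s + t) = 6 * B - 2 * (σ.1 + η.1) * A := by
    rw [hd, hA, hB]; linear_combination hsq - htq
  set m := max |A| |B| with hm
  have hAm : |A| ≤ m := le_max_left _ _
  have hBm : |B| ≤ m := le_max_right _ _
  have hm0 : (0:ℝ) ≤ m := le_trans (abs_nonneg _) hAm
  -- bound on |d| from below times (s+t)
  have habs1 : |6 * B - 2 * (σ.1 + η.1) * A| ≤ 6 * |B| + 40 * |A| := by
    calc |6 * B - 2 * (σ.1 + η.1) * A| ≤ |6 * B| + |2 * (σ.1 + η.1) * A| := abs_sub _ _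
      _ = 6 * |B| + 2 * |σ.1 + η.1| * |A| := by
          rw [abs_mul, abs_mul, abs_mul]; norm_num
      _ ≤ 6 * |B| + 40 * |A| := by
          have := mul_le_mul_of_nonneg_right hsum20 (abs_nonneg A)
          linarith
  have hdθ : |d| * (2 * θ) ≤ 6 * |B| + 40 * |A| := by
    calc |d| * (2 * θ) ≤ |d| * (s + t) := by
          apply mul_le_mul_of_nonneg_left (by linarith) (abs_nonneg _)
      _ = |d * (s + t)| := by rw [abs_mul, abs_of_nonneg (by linarith : (0:ℝ) ≤ s + t)]
      _ ≤ 6 * |B| + 40 * |A| := by rw [hd_st]; exact habs1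
  set a := 2 * A - d with ha
  set b := 2 * A + d with hb
  have hΦeq : stmt15Phi σ - stmt15Phi η = (a, b) := by
    unfold stmt15Phi
    rw [← hs, ← ht, Prod.mk_sub_mk, Prod.mk.injEq]
    constructor
    · rw [ha, hd, hA]; ring
    · rw [hb, hd, hA]; ring
  have hΦnorm : ‖stmt15Phi σ - stmt15Phi η‖ = max |a| |b| := by
    rw [hΦeq, Prod.norm_def]; simp [Real.norm_eq_abs]
  have hnorm : ‖σ - η‖ = m := by
    rw [Prod.norm_def]; simp [Real.norm_eq_abs, hm, hA, hB]
  set M := max |a| |b| with hM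
  have haM : |a| ≤ M := le_max_left _ _
  have hbM : |b| ≤ M := le_max_right _ _
  have hM0 : (0:ℝ) ≤ M := le_trans (abs_nonneg _) haM
  rw [hnorm, hΦnorm]
  constructor
  · -- lower bound
    have h4A : 4 * |A| ≤ 2 * M := by
      have : |a + b| ≤ |a| + |b| := abs_add_le _ _
      rw [show a + b = 4 * A by rw [ha, hb]; ring, abs_mul] at this
      norm_num at this; linarith
    have h2d : 2 * |d| ≤ 2 * M := by
      have : |b - a| ≤ |b| + |a| := abs_sub _ _
      rw [show b - a = 2 * d by rw [ha, hb]; ring, abs_mul] at this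
      norm_num at this; linarith
    have h6B : 6 * |B| ≤ 36 * M := by
      have heq : 6 * B = d * (s + t) + 2 * (σ.1 + η.1) * A := by linarith [hd_st]
      have h1 : |6 * B| ≤ |d| * (s + t) + 2 * |σ.1 + η.1| * |A| := by
        calc |6 * B| = |d * (s + t) + 2 * (σ.1 + η.1) * A| := by rw [heq]
          _ ≤ |d * (s + t)| + |2 * (σ.1 + η.1) * A| := abs_add_le _ _
          _ = |d| * (s + t) + 2 * |σ.1 + η.1| * |A| := by
              rw [abs_mul, abs_mul, abs_mul, abs_of_nonneg (by linarith : (0:ℝ) ≤ s + t)]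
              norm_num
      have hdM : |d| ≤ M := by linarith
      have hAM : |A| ≤ M / 2 + M / 2 := by linarith
      have p1 : |d| * (s + t) ≤ M * 16 :=
        mul_le_mul hdM (by linarith) (by linarith) hM0
      have p2 : |σ.1 + η.1| * |A| ≤ 10 * M := by
        calc |σ.1 + η.1| * |A| ≤ 20 * |A| :=
              mul_le_mul_of_nonneg_right hsum20 (abs_nonneg _)
          _ ≤ 10 * M := by linarith
      have h2 : |6 * B| = 6 * |B| := by rw [abs_mul]; norm_num
      rw [h2] at h1
      linarith
    have hm6 : m ≤ 6 * M := max_le (by linarith) (by linarith)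
    have hθm : θ * m ≤ m := by
      calc θ * m ≤ 1 * m := mul_le_mul_of_nonneg_right hθ1 hm0
        _ = m := one_mul _
    linarith
  · -- upper bound
    rw [show (25:ℝ) * θ⁻¹ * m = 25 * m / θ by rw [div_eq_mul_inv]; ring,
      le_div_iff₀ hθ]
    have hMle : M ≤ 2 * |A| + |d| := by
      apply max_le
      · calc |a| ≤ |2 * A| + |d| := abs_sub _ _
          _ = 2 * |A| + |d| := by rw [abs_mul]; norm_num
      · calc |b| ≤ |2 * A| + |d| := abs_add_le _ _
          _ = 2 * |A| + |d| := by rw [abs_mul]; norm_num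
    have h23 : |d| * θ ≤ 23 * m := by
      have he : |d| * (2 * θ) = 2 * (|d| * θ) := by ring
      rw [he] at hdθ
      linarith
    have hAθ : |A| * θ ≤ m := by
      calc |A| * θ ≤ |A| * 1 := mul_le_mul_of_nonneg_left hθ1 (abs_nonneg A)
        _ = |A| := mul_one _
        _ ≤ m := hAm
    have hMθ : M * θ ≤ (2 * |A| + |d|) * θ := mul_le_mul_of_nonneg_right hMle hθ.le
    have he2 : (2 * |A| + |d|) * θ = 2 * (|A| * θ) + |d| * θ := by ring
    linarith [he2 ▸ hMθ]
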